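/- For any positive natural number m, there exists a positive natural number N such that p_{n+1}^m < ∏_{i=1}^{n} p_i for all n ≥ N. -/

import Mathlib

open Filter Real Finset

/-- The n-th prime number, 1-indexed: `p 1 = 2`, `p 2 = 3`, ... -/
noncomputable def p (n : ℕ) : ℕ := Nat.nth Nat.Prime (n - 1)

/-- The n-th primorial: `primor n = ∏_{i=1}^n p i`. -/
noncomputable def primor (n : ℕ) : ℕ := ∏ i ∈ Finset.Icc 1 n, p i

/-!
By Bertrand's postulate `p (n + 1) ≤ 2 ^ (n + 1)`, so `p (n + 1) ^ m ≤ (2 ^ m) ^ (n + 1)` grows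
only exponentially in `n`, while `p i ≥ i + 1` gives `primor n ≥ (n + 1)!`, which eventually
beats any exponential.
-/

theorem Nat.nth_prime_succ_le_two_mul (k : ℕ) :
    Nat.nth Nat.Prime (k + 1) ≤ 2 * Nat.nth Nat.Prime k := by
  obtain ⟨q, hq, hlt, hle⟩ :=
    Nat.exists_prime_lt_and_le_two_mul _ (Nat.prime_nth_prime k).ne_zero
  exact (not_lt.1 fun h => (Nat.le_nth_of_lt_nth_succ h hq).not_gt hlt).trans hle

theorem Nat.nth_prime_le_two_pow (k : ℕ) : Nat.nth Nat.Prime k ≤ 2 ^ (k + 1) := by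
  induction k with
  | zero => simp [Nat.nth_prime_zero_eq_two]
  | succ k ih =>
    calc Nat.nth Nat.Prime (k + 1) ≤ 2 * Nat.nth Nat.Prime k := Nat.nth_prime_succ_le_two_mul k
      _ ≤ 2 * 2 ^ (k + 1) := Nat.mul_le_mul_left 2 ih
      _ = 2 ^ (k + 2) := by ring

theorem p_succ_le_two_pow (n : ℕ) : p (n + 1) ≤ 2 ^ (n + 1) := by
  simpa [p] using Nat.nth_prime_le_two_pow n

theorem primor_succ (n : ℕ) : primor (n + 1) = primor n * p (n + 1) :=
  Finset.prod_Icc_succ_top (Nat.le_add_left 1 n) p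

theorem factorial_succ_le_primor (n : ℕ) : (n + 1).factorial ≤ primor n := by
  induction n with
  | zero => simp [primor]
  | succ n ih =>
    have h_prime_ge : n + 2 ≤ p (n + 1) := by simpa [p] using Nat.add_two_le_nth_prime n
    rw [primor_succ, Nat.factorial_succ, mul_comm]
    exact Nat.mul_le_mul ih h_prime_ge

theorem eventually_p_succ_pow_lt_primor (m : ℕ) : ∀ᶠ n in atTop, p (n + 1) ^ m < primor n := by
  filter_upwards [(tendsto_add_atTop_nat 2).eventually
    (Nat.eventually_pow_lt_factorial_sub (2 ^ m) 1)] with n hn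
  calc p (n + 1) ^ m ≤ (2 ^ (n + 1)) ^ m := Nat.pow_le_pow_left (p_succ_le_two_pow n) m
    _ = (2 ^ m) ^ (n + 1) := by rw [← pow_mul, ← pow_mul, mul_comm]
    _ ≤ (2 ^ m) ^ (n + 2) := Nat.pow_le_pow_right Nat.one_le_two_pow (Nat.le_succ _)
    _ < (n + 1).factorial := hn
    _ ≤ primor n := factorial_succ_le_primor n

theorem stmt_2_general (m : ℕ) :
    ∃ N : ℕ, 1 ≤ N ∧ ∀ n : ℕ, N ≤ n → p (n + 1) ^ m < primor n := by
  obtain ⟨N, hN⟩ := eventually_atTop.1 (eventually_p_succ_pow_lt_primor m)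
  exact ⟨N + 1, N.succ_pos, fun n hn => hN n (Nat.le_of_succ_le hn)⟩

theorem stmt_2 (m : ℕ) (hm : 1 ≤ m) :
    ∃ N : ℕ, 1 ≤ N ∧ ∀ n : ℕ, N ≤ n → p (n + 1) ^ m < primor n :=
  stmt_2_general m
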